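/- Let B = (b₁,…,bₙ) ∈ ℝ^{d×n} be a basis with Gram–Schmidt orthogonalization b̃₁,…,b̃ₙ and coefficients μ_{i,j}, let α₁,…,αₙ > 0 be reals, and let A : ℝ^d → ℝ^d be the linear map with A b̃ᵢ = b̃ᵢ/αᵢ for all i and A y = y for all y orthogonal to span(b₁,…,bₙ). Then for every y ∈ ℝ^d and every i ∈ {1,…,n}: Π_{{b₁,…,bᵢ}^⊥}(A y) = A·Π_{{b₁,…,bᵢ}^⊥}(y) = A·Π_{{Ab₁,…,Abᵢ}^⊥}(y). In particular, the basis B' := (Ab₁,…,Abₙ) has Gram–Schmidt vectors b̃'ᵢ = b̃ᵢ/αᵢ and Gram–Schmidt coefficients μ'_{i,j} = μ_{i,j} for all i, j. -/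

import Mathlib

open scoped RealInnerProductSpace BigOperators

noncomputable section

/-- The set of integer linear combinations of `B 0, …, B (n-1)`. -/
def zspan {d n : ℕ} (B : Fin n → EuclideanSpace ℝ (Fin d)) : Set (EuclideanSpace ℝ (Fin d)) :=
  {x | ∃ c : Fin n → ℤ, x = ∑ i, (c i : ℝ) • B i}

/-- `L` is a lattice of rank `n`: the ℤ-span of `n` ℝ-linearly independent vectors. -/
def IsLattice {d : ℕ} (L : Set (EuclideanSpace ℝ (Fin d))) (n : ℕ) : Prop :=
  ∃ B : Fin n → EuclideanSpace ℝ (Fin d), LinearIndependent ℝ B ∧ L = zspan B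

/-- The dual set `S* := {w ∈ span_ℝ S : ⟨w,y⟩ ∈ ℤ for all y ∈ S}`. -/
def dualSet {d : ℕ} (S : Set (EuclideanSpace ℝ (Fin d))) : Set (EuclideanSpace ℝ (Fin d)) :=
  {w | w ∈ Submodule.span ℝ S ∧ ∀ y ∈ S, ∃ m : ℤ, ⟪w, y⟫ = (m : ℝ)}

/-- Orthogonal projection onto the orthogonal complement of `span_ℝ S`. -/
def projPerp {d : ℕ} (S : Set (EuclideanSpace ℝ (Fin d))) (x : EuclideanSpace ℝ (Fin d)) : EuclideanSpace ℝ (Fin d) :=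
  ((Submodule.span ℝ S)ᗮ.orthogonalProjectionOnto x : EuclideanSpace ℝ (Fin d))

/-- `det(ℒ) = √(det(BᵀB))`, computed from a basis `B` via its Gram matrix. -/
def gramDet {d n : ℕ} (B : Fin n → EuclideanSpace ℝ (Fin d)) : ℝ :=
  Real.sqrt (Matrix.det (Matrix.of fun i j => ⟪B i, B j⟫))

/-- The Gram–Schmidt orthogonalization `b̃ᵢ = Π_{{b₁,…,b_(i-1)}^⊥}(bᵢ)`. -/
def gsVec {d n : ℕ} (B : Fin n → EuclideanSpace ℝ (Fin d)) (i : Fin n) : EuclideanSpace ℝ (Fin d) :=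
  projPerp (B '' {j | j < i}) (B i)

/-- The Gram–Schmidt coefficients `μ_(i,j) = ⟨b̃ᵢ, bⱼ⟩ / ‖b̃ᵢ‖²`. -/
def mu {d n : ℕ} (B : Fin n → EuclideanSpace ℝ (Fin d)) (i j : Fin n) : ℝ :=
  ⟪gsVec B i, B j⟫ / ‖gsVec B i‖ ^ 2

/-- `B` is an LLL-reduced basis (with parameter δ = 3/4). -/
def IsLLLReduced {d n : ℕ} (B : Fin n → EuclideanSpace ℝ (Fin d)) : Prop :=
  LinearIndependent ℝ B ∧
  (∀ i j : Fin n, i < j → |mu B i j| ≤ 1 / 2) ∧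
  (∀ (i : ℕ) (h : i + 1 < n),
    (3 / 4) * ‖gsVec B ⟨i, Nat.lt_of_succ_lt h⟩‖ ^ 2 ≤
      ‖gsVec B ⟨i + 1, h⟩‖ ^ 2 +
        (mu B ⟨i, Nat.lt_of_succ_lt h⟩ ⟨i + 1, h⟩) ^ 2 * ‖gsVec B ⟨i, Nat.lt_of_succ_lt h⟩‖ ^ 2)

/-!
The Gram–Schmidt vectors `b̃ᵢ` are orthogonal eigenvectors of `A`, and `A` is the identity on the
complement of their span, so `⟪b̃ᵢ, A x⟫ = αᵢ⁻¹ ⟪b̃ᵢ, x⟫` for every `x`. Hence `A` preserves both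
`span (b₁, …, bᵢ) = span (b̃₁, …, b̃ᵢ)` and its orthogonal complement, so it commutes with the
projection onto that complement. Since the `αᵢ` are nonzero, `A` maps `span (b̃₁, …, b̃ᵢ)` onto
itself, so `A b₁, …, A bᵢ` span the same space as `b₁, …, bᵢ`. Projecting `A bᵢ` away from
`A b₁, …, A b_(i-1)` therefore gives `A b̃ᵢ = b̃ᵢ / αᵢ`, and `μ' = μ` follows from the identity above.
-/

open Submodule Module.End InnerProductSpace

section OrthogonalEigenvectors

variable {E ι : Type*} [NormedAddCommGroup E] [InnerProductSpace ℝ E]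
  {v : ι → E} {c : ι → ℝ} {A : E →ₗ[ℝ] E}

theorem Submodule.mem_orthogonal_span_iff {s : Set E} {x : E} :
    x ∈ (span ℝ s)ᗮ ↔ ∀ u ∈ s, ⟪u, x⟫ = 0 := by
  rw [← span_singleton_le_iff_mem, ← isOrtho_iff_le, isOrtho_comm, isOrtho_span]
  simp

theorem Submodule.starProjection_commute_of_mem_invtSubmodule (K : Submodule ℝ E)
    [K.HasOrthogonalProjection] {T : E →ₗ[ℝ] E}
    (hK : K ∈ invtSubmodule T) (hKperp : Kᗮ ∈ invtSubmodule T) :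
    Commute (K.starProjection : E →ₗ[ℝ] E) T :=
  LinearMap.IsIdempotentElem.commute_iff
    (ContinuousLinearMap.IsIdempotentElem.toLinearMap K.isIdempotentElem_starProjection) |>.2
    ⟨by simpa using hK, by simpa using hKperp⟩

theorem inner_map_eq_mul_inner_of_orthogonal_eigenvectors
    [(span ℝ (Set.range v)).HasOrthogonalProjection] (hv : Pairwise fun i j => ⟪v i, v j⟫ = 0)
    (hAv : ∀ i, A (v i) = c i • v i) (hA : ∀ y ∈ (span ℝ (Set.range v))ᗮ, A y = y)
    (i : ι) (x : E) : ⟪v i, A x⟫ = c i * ⟪v i, x⟫ := by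
  set K := span ℝ (Set.range v)
  have hK : ∀ w ∈ K, ⟪v i, A w⟫ = c i * ⟪v i, w⟫ := by
    intro w hw
    induction hw using span_induction with
    | mem u hu =>
      obtain ⟨j, rfl⟩ := hu
      rw [hAv, real_inner_smul_right]
      rcases eq_or_ne i j with rfl | hij
      · ring
      · simp [hv hij]
    | zero => simp
    | add u w _ _ hu hw => rw [map_add, inner_add_right, hu, hw, inner_add_right]; ring
    | smul a u _ hu => rw [map_smul, real_inner_smul_right, hu, real_inner_smul_right]; ring
  have hperp : x - K.starProjection x ∈ Kᗮ := K.sub_starProjection_mem_orthogonal x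
  have hvi : ⟪v i, x - K.starProjection x⟫ = 0 :=
    inner_right_of_mem_orthogonal (subset_span (Set.mem_range_self i)) hperp
  have hx : x = K.starProjection x + (x - K.starProjection x) := by abel
  rw [hx, map_add, hA _ hperp, inner_add_right, inner_add_right, hvi,
    hK _ (K.starProjection_apply_mem x)]
  ring

theorem span_image_mem_invtSubmodule (hAv : ∀ i, A (v i) = c i • v i) (S : Set ι) :
    span ℝ (v '' S) ∈ invtSubmodule A := by
  rw [mem_invtSubmodule, span_le]
  rintro _ ⟨j, hj, rfl⟩
  simpa [hAv] using smul_mem _ (c j) (subset_span (Set.mem_image_of_mem v hj))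

theorem orthogonal_span_image_mem_invtSubmodule
    (hA : ∀ i x, ⟪v i, A x⟫ = c i * ⟪v i, x⟫) (S : Set ι) :
    (span ℝ (v '' S))ᗮ ∈ invtSubmodule A := by
  intro x hx
  simp only [Submodule.mem_comap, mem_orthogonal_span_iff, Set.forall_mem_image] at hx ⊢
  intro j hj
  rw [hA, hx hj, mul_zero]

theorem map_span_image_eq_of_eigenvectors (hAv : ∀ i, A (v i) = c i • v i) {S : Set ι}
    (hc : ∀ i ∈ S, c i ≠ 0) : (span ℝ (v '' S)).map A = span ℝ (v '' S) := by
  refine le_antisymm (map_le_iff_le_comap.2 (span_image_mem_invtSubmodule hAv S)) ?_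
  rw [span_le]
  rintro _ ⟨j, hj, rfl⟩
  refine ⟨(c j)⁻¹ • v j, smul_mem _ _ (subset_span (Set.mem_image_of_mem v hj)), ?_⟩
  rw [map_smul, hAv, smul_smul, inv_mul_cancel₀ (hc j hj), one_smul]

end OrthogonalEigenvectors

section GramSchmidt

variable {d n : ℕ}

theorem projPerp_eq_starProjection (S : Set (EuclideanSpace ℝ (Fin d)))
    (x : EuclideanSpace ℝ (Fin d)) : projPerp S x = (span ℝ S)ᗮ.starProjection x :=
  rfl

theorem projPerp_congr {S T : Set (EuclideanSpace ℝ (Fin d))} (h : span ℝ S = span ℝ T)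
    (x : EuclideanSpace ℝ (Fin d)) : projPerp S x = projPerp T x := by
  rw [projPerp_eq_starProjection, projPerp_eq_starProjection, h]

theorem projPerp_eq_of_mem {S : Set (EuclideanSpace ℝ (Fin d))} {x z : EuclideanSpace ℝ (Fin d)}
    (hz : z ∈ (span ℝ S)ᗮ) (hxz : x - z ∈ span ℝ S) : projPerp S x = z :=
  eq_starProjection_of_mem_orthogonal hz (by rwa [orthogonal_orthogonal])

theorem gsVec_eq_projPerp_Iio (B : Fin n → EuclideanSpace ℝ (Fin d)) (i : Fin n) :
    gsVec B i = projPerp (B '' Set.Iio i) (B i) :=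
  rfl

theorem gsVec_eq_gramSchmidt (B : Fin n → EuclideanSpace ℝ (Fin d)) :
    gsVec B = gramSchmidt ℝ B := by
  funext i
  rw [gsVec_eq_projPerp_Iio]
  refine projPerp_eq_of_mem ?_ ?_
  · rw [← span_gramSchmidt_Iio, mem_orthogonal_span_iff]
    rintro _ ⟨j, hj, rfl⟩
    exact gramSchmidt_orthogonal ℝ B (ne_of_lt hj)
  · rw [← span_gramSchmidt_Iio]
    nth_rw 1 [gramSchmidt_def'' ℝ B i]
    rw [add_sub_cancel_left]
    refine sum_mem fun j hj => smul_mem _ _ (subset_span ⟨j, ?_, rfl⟩)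
    exact Finset.mem_Iio.1 hj

structure IsGramSchmidtRescaling (B : Fin n → EuclideanSpace ℝ (Fin d)) (α : Fin n → ℝ)
    (A : EuclideanSpace ℝ (Fin d) →ₗ[ℝ] EuclideanSpace ℝ (Fin d)) : Prop where
  map_gramSchmidt : ∀ i, A (gramSchmidt ℝ B i) = (α i)⁻¹ • gramSchmidt ℝ B i
  map_of_mem_orthogonal : ∀ y ∈ (span ℝ (Set.range B))ᗮ, A y = y

namespace IsGramSchmidtRescaling

variable {B : Fin n → EuclideanSpace ℝ (Fin d)} {α : Fin n → ℝ}
  {A : EuclideanSpace ℝ (Fin d) →ₗ[ℝ] EuclideanSpace ℝ (Fin d)}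

theorem inner_gramSchmidt_map (hA : IsGramSchmidtRescaling B α A) (i : Fin n)
    (x : EuclideanSpace ℝ (Fin d)) :
    ⟪gramSchmidt ℝ B i, A x⟫ = (α i)⁻¹ * ⟪gramSchmidt ℝ B i, x⟫ :=
  inner_map_eq_mul_inner_of_orthogonal_eigenvectors (gramSchmidt_pairwise_orthogonal ℝ B)
    hA.map_gramSchmidt (by simpa only [span_gramSchmidt] using hA.map_of_mem_orthogonal) i x

theorem projPerp_map_comm (hA : IsGramSchmidtRescaling B α A) {S : Set (Fin n)}
    (hS : span ℝ (gramSchmidt ℝ B '' S) = span ℝ (B '' S)) (y : EuclideanSpace ℝ (Fin d)) :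
    projPerp (B '' S) (A y) = A (projPerp (B '' S) y) := by
  set K := span ℝ (gramSchmidt ℝ B '' S)
  have hcomm : Commute (Kᗮ.starProjection : _ →ₗ[ℝ] _) A := by
    refine Kᗮ.starProjection_commute_of_mem_invtSubmodule
      (orthogonal_span_image_mem_invtSubmodule hA.inner_gramSchmidt_map S) ?_
    rw [orthogonal_orthogonal]
    exact span_image_mem_invtSubmodule hA.map_gramSchmidt S
  rw [projPerp_eq_starProjection, projPerp_eq_starProjection, ← hS]
  exact LinearMap.congr_fun hcomm.eq y

theorem span_image_map_eq (hA : IsGramSchmidtRescaling B α A) (hα : ∀ i, α i ≠ 0)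
    {S : Set (Fin n)} (hS : span ℝ (gramSchmidt ℝ B '' S) = span ℝ (B '' S)) :
    span ℝ ((fun j => A (B j)) '' S) = span ℝ (B '' S) := by
  rw [← Set.image_image, ← map_span, ← hS,
    map_span_image_eq_of_eigenvectors hA.map_gramSchmidt fun i _ => inv_ne_zero (hα i)]

theorem gramSchmidt_map (hA : IsGramSchmidtRescaling B α A) (hα : ∀ i, α i ≠ 0) (i : Fin n) :
    gramSchmidt ℝ (fun j => A (B j)) i = (α i)⁻¹ • gramSchmidt ℝ B i := by
  have hS := span_gramSchmidt_Iio ℝ B i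
  rw [← gsVec_eq_gramSchmidt, gsVec_eq_projPerp_Iio, projPerp_congr (hA.span_image_map_eq hα hS),
    hA.projPerp_map_comm hS, ← gsVec_eq_projPerp_Iio, gsVec_eq_gramSchmidt, hA.map_gramSchmidt]

theorem mu_map (hA : IsGramSchmidtRescaling B α A) (hα : ∀ i, α i ≠ 0) (i j : Fin n) :
    mu (fun j => A (B j)) i j = mu B i j := by
  rw [mu, mu, gsVec_eq_gramSchmidt, gsVec_eq_gramSchmidt, hA.gramSchmidt_map hα,
    real_inner_smul_left, hA.inner_gramSchmidt_map, norm_smul, mul_pow, Real.norm_eq_abs, sq_abs,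
    ← mul_assoc, ← sq, mul_div_mul_left _ _ (pow_ne_zero 2 (inv_ne_zero (hα i)))]

end IsGramSchmidtRescaling

end GramSchmidt

theorem stmt16_general {d n : ℕ} (B : Fin n → EuclideanSpace ℝ (Fin d))
    (α : Fin n → ℝ) (hαpos : ∀ i, 0 < α i)
    (A : EuclideanSpace ℝ (Fin d) →ₗ[ℝ] EuclideanSpace ℝ (Fin d))
    (hA1 : ∀ i : Fin n, A (gsVec B i) = (α i)⁻¹ • gsVec B i)
    (hA2 : ∀ y ∈ (Submodule.span ℝ (Set.range B))ᗮ, A y = y) :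
    (∀ (y : EuclideanSpace ℝ (Fin d)) (i : Fin n),
      projPerp (B '' {j | j ≤ i}) (A y) = A (projPerp (B '' {j | j ≤ i}) y) ∧
      A (projPerp (B '' {j | j ≤ i}) y) =
        A (projPerp ((fun j => A (B j)) '' {j | j ≤ i}) y)) ∧
    (∀ i : Fin n, gsVec (fun j => A (B j)) i = (α i)⁻¹ • gsVec B i) ∧
    (∀ i j : Fin n, mu (fun j => A (B j)) i j = mu B i j) := by
  have hA : IsGramSchmidtRescaling B α A := ⟨by simpa only [gsVec_eq_gramSchmidt] using hA1, hA2⟩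
  have hα : ∀ i, α i ≠ 0 := fun i => (hαpos i).ne'
  refine ⟨fun y i => ⟨?_, ?_⟩, fun i => ?_, hA.mu_map hα⟩
  · exact hA.projPerp_map_comm (span_gramSchmidt_Iic ℝ B i) y
  · have hspan := hA.span_image_map_eq hα (span_gramSchmidt_Iic ℝ B i)
    exact congrArg A (projPerp_congr hspan.symm y)
  · rw [gsVec_eq_gramSchmidt, gsVec_eq_gramSchmidt, hA.gramSchmidt_map hα]

theorem stmt16 {d n : ℕ} (B : Fin n → EuclideanSpace ℝ (Fin d)) (hB : LinearIndependent ℝ B)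
    (α : Fin n → ℝ) (hαpos : ∀ i, 0 < α i)
    (A : EuclideanSpace ℝ (Fin d) →ₗ[ℝ] EuclideanSpace ℝ (Fin d))
    (hA1 : ∀ i : Fin n, A (gsVec B i) = (α i)⁻¹ • gsVec B i)
    (hA2 : ∀ y ∈ (Submodule.span ℝ (Set.range B))ᗮ, A y = y) :
    (∀ (y : EuclideanSpace ℝ (Fin d)) (i : Fin n),
      projPerp (B '' {j | j ≤ i}) (A y) = A (projPerp (B '' {j | j ≤ i}) y) ∧
      A (projPerp (B '' {j | j ≤ i}) y) =
        A (projPerp ((fun j => A (B j)) '' {j | j ≤ i}) y)) ∧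
    (∀ i : Fin n, gsVec (fun j => A (B j)) i = (α i)⁻¹ • gsVec B i) ∧
    (∀ i j : Fin n, mu (fun j => A (B j)) i j = mu B i j) :=
  stmt16_general B α hαpos A hA1 hA2
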